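/- Let H be a real Hilbert space and (U(t))_{t∈ℝ} a family of continuous linear operators on H with U(0) = I, U(t+s) = U(t)U(s) for all t,s ∈ ℝ, and such that t ↦ U(t)y is continuous for every y ∈ H. Fix T̄ > 0. Let F₀ : H → ℝ be Fréchet differentiable with continuous derivative DF₀, and let H₀ : [0,T̄] × H → ℝ be continuous, Fréchet differentiable in its second variable, with DH₀ continuous on [0,T̄] × H. Let x, a ∈ H be such that for every t ∈ ℝ the map s ↦ U(s)x is differentiable at t with derivative U(t)a. Define F(t) := F₀(U(−t)x) + ∫₀ᵗ H₀(s, U(s−t)x) ds for t ∈ [0,T̄]. Then F is differentiable on (0,T̄) and for every t ∈ (0,T̄): F′(t) + DF₀(U(−t)x)(U(−t)a) + ∫₀ᵗ DH₀(s, U(s−t)x)(U(s−t)a) ds = H₀(t, x). -/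

import Mathlib

open MeasureTheory

/-- Let `(U(t))_{t∈ℝ}` be a strongly continuous group of continuous linear
operators on a real Hilbert space `H`, `F₀ ∈ C¹(H)`, `H₀ : [0,T̄] × H → ℝ` continuous
and `C¹` in its second variable with continuous derivative, and let `x, a ∈ H` satisfy
`d/dt U(t)x = U(t)a` for all `t` (i.e. `x ∈ D(A)`, `a = Ax`). Then
`F(t) = F₀(U(−t)x) + ∫₀ᵗ H₀(s, U(s−t)x) ds` is differentiable on `(0,T̄)` and
`F′(t) + DF₀(U(−t)x)(U(−t)a) + ∫₀ᵗ DH₀(s, U(s−t)x)(U(s−t)a) ds = H₀(t,x)`. -/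
theorem stmt_9 (H : Type*) [NormedAddCommGroup H] [InnerProductSpace ℝ H] [CompleteSpace H]
    (U : ℝ → H →L[ℝ] H)
    (hU0 : U 0 = ContinuousLinearMap.id ℝ H)
    (hUadd : ∀ t s : ℝ, U (t + s) = (U t).comp (U s))
    (hUcont : ∀ y : H, Continuous fun t => U t y)
    (Tb : ℝ) (hTb : 0 < Tb)
    (F₀ : H → ℝ) (hF₀ : Differentiable ℝ F₀)
    (hDF₀ : Continuous fun y => fderiv ℝ F₀ y)
    (H₀ : ℝ → H → ℝ)
    (hH₀c : ContinuousOn (fun p : ℝ × H => H₀ p.1 p.2)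
      (Set.Icc (0:ℝ) Tb ×ˢ (Set.univ : Set H)))
    (hH₀d : ∀ s ∈ Set.Icc (0:ℝ) Tb, Differentiable ℝ (H₀ s))
    (hDH₀ : ContinuousOn (fun p : ℝ × H => fderiv ℝ (H₀ p.1) p.2)
      (Set.Icc (0:ℝ) Tb ×ˢ (Set.univ : Set H)))
    (x a : H)
    (hxa : ∀ t : ℝ, HasDerivAt (fun s : ℝ => U s x) (U t a) t)
    (F : ℝ → ℝ)
    (hF : ∀ t, F t = F₀ (U (-t) x) + ∫ s in Set.Ioc (0:ℝ) t, H₀ s (U (s - t) x)) :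
    ∀ t ∈ Set.Ioo (0:ℝ) Tb,
      DifferentiableAt ℝ F t ∧
      deriv F t + fderiv ℝ F₀ (U (-t) x) (U (-t) a) +
        (∫ s in Set.Ioc (0:ℝ) t, fderiv ℝ (H₀ s) (U (s - t) x) (U (s - t) a))
        = H₀ t x := by
  intro t₀ ht₀
  obtain ⟨ht₀0, ht₀T⟩ := ht₀
  have hU0x : U 0 x = x := by rw [hU0]; rfl
  -- derivative of `t ↦ U (s - t) x`
  have hinner : ∀ (s t : ℝ), HasDerivAt (fun t => U (s - t) x) (-(U (s - t) a)) t := by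
    intro s t
    have h1 : HasDerivAt (fun t : ℝ => s - t) (-1) t := (hasDerivAt_id t).const_sub s
    have h2 := (hxa (s - t)).scomp t h1
    simpa [Function.comp_def] using h2
  -- shorthand
  set g : ℝ → ℝ → ℝ := fun t s => H₀ s (U (s - t) x) with hg_def
  set g' : ℝ → ℝ → ℝ := fun t s => -(fderiv ℝ (H₀ s) (U (s - t) x) (U (s - t) a)) with hg'_def
  have hg' : ∀ (s : ℝ), s ∈ Set.Icc (0:ℝ) Tb → ∀ t : ℝ,
      HasDerivAt (fun t => g t s) (g' t s) t := by
    intro s hs t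
    have hd := ((hH₀d s hs (U (s - t) x)).hasFDerivAt).comp_hasDerivAt t (hinner s t)
    simpa [hg_def, hg'_def, Function.comp_def] using hd
  -- joint continuity of `g` on univ ×ˢ Icc 0 Tb
  have hmap : Continuous fun p : ℝ × ℝ => ((p.2, U (p.2 - p.1) x) : ℝ × H) :=
    continuous_snd.prodMk ((hUcont x).comp (continuous_snd.sub continuous_fst))
  have hmapa : Continuous fun p : ℝ × ℝ => (U (p.2 - p.1) a : H) :=
    (hUcont a).comp (continuous_snd.sub continuous_fst)
  have hmapsto : ∀ p : ℝ × ℝ, p ∈ (Set.univ ×ˢ Set.Icc (0:ℝ) Tb : Set (ℝ × ℝ)) →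
      ((p.2, U (p.2 - p.1) x) : ℝ × H) ∈ Set.Icc (0:ℝ) Tb ×ˢ (Set.univ : Set H) := by
    intro p hp
    exact ⟨hp.2, Set.mem_univ _⟩
  have hgc : ContinuousOn (fun p : ℝ × ℝ => g p.1 p.2)
      (Set.univ ×ˢ Set.Icc (0:ℝ) Tb) :=
    hH₀c.comp hmap.continuousOn hmapsto
  -- joint continuity of the derivative evaluation
  have hDc : ContinuousOn
      (fun p : ℝ × ℝ => (fderiv ℝ (H₀ p.2) (U (p.2 - p.1) x)) (U (p.2 - p.1) a))
      (Set.univ ×ˢ Set.Icc (0:ℝ) Tb) := by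
    have h1 : ContinuousOn (fun p : ℝ × ℝ => fderiv ℝ (H₀ p.2) (U (p.2 - p.1) x))
        (Set.univ ×ˢ Set.Icc (0:ℝ) Tb) := hDH₀.comp hmap.continuousOn hmapsto
    exact isBoundedBilinearMap_apply.continuous.comp_continuousOn
      (h1.prodMk hmapa.continuousOn)
  -- one-variable continuity
  have hpair : ∀ t : ℝ, Continuous fun s : ℝ => ((t, s) : ℝ × ℝ) := fun t =>
    continuous_const.prodMk continuous_id
  have hg_cont : ∀ t : ℝ, ContinuousOn (fun s => g t s) (Set.Icc (0:ℝ) Tb) := by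
    intro t
    exact hgc.comp (hpair t).continuousOn (fun s hs => ⟨Set.mem_univ _, hs⟩)
  have hg'_cont : ∀ t : ℝ, ContinuousOn (fun s => g' t s) (Set.Icc (0:ℝ) Tb) := by
    intro t
    exact (hDc.comp (hpair t).continuousOn (fun s hs => ⟨Set.mem_univ _, hs⟩)).neg
  -- choice of ε
  set ε : ℝ := min t₀ (Tb - t₀) / 2 with hε_def
  have hε : 0 < ε := by
    have : 0 < min t₀ (Tb - t₀) := lt_min ht₀0 (by linarith)
    positivity
  have hball : ∀ t : ℝ, |t - t₀| < ε → t ∈ Set.Ioo (0:ℝ) Tb := by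
    intro t ht
    rw [abs_sub_lt_iff] at ht
    constructor
    · nlinarith [min_le_left t₀ (Tb - t₀)]
    · nlinarith [min_le_right t₀ (Tb - t₀)]
  -- integrability helpers
  have hIoc_sub : ∀ t ∈ Set.Ioo (0:ℝ) Tb, Set.uIcc (0:ℝ) t ⊆ Set.Icc (0:ℝ) Tb := by
    intro t ht
    rw [Set.uIcc_of_le ht.1.le]
    exact Set.Icc_subset_Icc le_rfl ht.2.le
  have hIntg : ∀ t ∈ Set.Icc (0:ℝ) Tb, ∀ t' ∈ Set.Icc (0:ℝ) Tb, ∀ τ : ℝ,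
      IntervalIntegrable (fun s => g τ s) volume t t' := by
    intro t ht t' ht' τ
    exact ((hg_cont τ).mono (Set.uIcc_subset_Icc ht ht')).intervalIntegrable
  have ht₀Ioo : t₀ ∈ Set.Ioo (0:ℝ) Tb := ⟨ht₀0, ht₀T⟩
  have ht₀Icc : t₀ ∈ Set.Icc (0:ℝ) Tb := ⟨ht₀0.le, ht₀T.le⟩
  have h0Icc : (0:ℝ) ∈ Set.Icc (0:ℝ) Tb := ⟨le_rfl, hTb.le⟩
  have hIoc_Icc : Set.uIoc (0:ℝ) t₀ ⊆ Set.Icc (0:ℝ) Tb := by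
    rw [Set.uIoc_of_le ht₀0.le]
    exact fun s hs => ⟨hs.1.le, hs.2.trans ht₀T.le⟩
  -- Part B1 : derivative of the fixed-endpoint parametric integral
  obtain ⟨C, hC⟩ : ∃ C, ∀ p ∈ (Set.Icc (t₀ - ε) (t₀ + ε) ×ˢ Set.Icc (0:ℝ) Tb : Set (ℝ × ℝ)),
      ‖(fderiv ℝ (H₀ p.2) (U (p.2 - p.1) x)) (U (p.2 - p.1) a)‖ ≤ C :=
    (isCompact_Icc.prod isCompact_Icc).exists_bound_of_continuousOn
      (hDc.mono (Set.prod_mono (Set.subset_univ _) subset_rfl))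
  have hmeas : ∀ᶠ t in nhds t₀,
      AEStronglyMeasurable (g t) (volume.restrict (Set.uIoc (0:ℝ) t₀)) :=
    Filter.Eventually.of_forall fun t =>
      ((hg_cont t).mono hIoc_Icc).aestronglyMeasurable measurableSet_uIoc
  have hint : IntervalIntegrable (g t₀) volume 0 t₀ := hIntg 0 h0Icc t₀ ht₀Icc t₀
  have hmeas' : AEStronglyMeasurable (g' t₀) (volume.restrict (Set.uIoc (0:ℝ) t₀)) :=
    ((hg'_cont t₀).mono hIoc_Icc).aestronglyMeasurable measurableSet_uIoc
  have hbound : ∀ᵐ s ∂(volume : Measure ℝ), s ∈ Set.uIoc (0:ℝ) t₀ →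
      ∀ t ∈ Metric.ball t₀ ε, ‖g' t s‖ ≤ C := by
    refine ae_of_all _ fun s hs t ht => ?_
    have htm : |t - t₀| < ε := by
      simpa [Real.dist_eq] using ht
    have hK : ((t, s) : ℝ × ℝ) ∈
        (Set.Icc (t₀ - ε) (t₀ + ε) ×ˢ Set.Icc (0:ℝ) Tb : Set (ℝ × ℝ)) := by
      rw [abs_sub_lt_iff] at htm
      exact ⟨⟨by linarith, by linarith⟩, hIoc_Icc hs⟩
    have := hC (t, s) hK
    simpa [hg'_def, Real.norm_eq_abs, abs_neg] using this
  have hbint : IntervalIntegrable (fun _ : ℝ => C) volume 0 t₀ := intervalIntegrable_const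
  have hdiff : ∀ᵐ s ∂(volume : Measure ℝ), s ∈ Set.uIoc (0:ℝ) t₀ →
      ∀ t ∈ Metric.ball t₀ ε, HasDerivAt (fun t => g t s) (g' t s) t :=
    ae_of_all _ fun s hs t _ => hg' s (hIoc_Icc hs) t
  have hB1 : HasDerivAt (fun t => ∫ s in (0:ℝ)..t₀, g t s)
      (∫ s in (0:ℝ)..t₀, g' t₀ s) t₀ :=
    (intervalIntegral.hasDerivAt_integral_of_dominated_loc_of_deriv_le (Metric.ball_mem_nhds t₀ hε) hmeas hint hmeas'
      hbound hbint hdiff).2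
  -- Part B2 : derivative of the moving-endpoint term
  have hB2 : HasDerivAt (fun t => ∫ s in t₀..t, g t s) (H₀ t₀ x) t₀ := by
    have hL : g t₀ t₀ = H₀ t₀ x := by simp [hg_def, hU0x]
    rw [hasDerivAt_iff_isLittleO, Asymptotics.isLittleO_iff]
    intro c hc
    have hCA : ContinuousAt (fun p : ℝ × ℝ => g p.1 p.2) (t₀, t₀) :=
      hgc.continuousAt (prod_mem_nhds Filter.univ_mem (Icc_mem_nhds ht₀0 ht₀T))
    have hev : ∀ᶠ p : ℝ × ℝ in nhds (t₀, t₀), dist (g p.1 p.2) (g t₀ t₀) ≤ c :=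
      hCA (Metric.closedBall_mem_nhds _ hc)
    obtain ⟨δ, hδpos, hδ⟩ := Metric.eventually_nhds_iff.mp hev
    have hδ'pos : 0 < min ε δ := lt_min hε hδpos
    filter_upwards [Metric.ball_mem_nhds t₀ hδ'pos] with t ht
    have htm : |t - t₀| < min ε δ := by simpa [Real.dist_eq] using ht
    have htI : t ∈ Set.Ioo (0:ℝ) Tb := hball t (htm.trans_le (min_le_left _ _))
    have hint_t : IntervalIntegrable (fun s => g t s) volume t₀ t :=
      hIntg t₀ ht₀Icc t ⟨htI.1.le, htI.2.le⟩ t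
    have e2 : ∀ s ∈ Set.uIoc t₀ t, ‖g t s - H₀ t₀ x‖ ≤ c := by
      intro s hs
      have habs : |s - t₀| ≤ |t - t₀| := by
        rw [Set.mem_uIoc] at hs
        have h1 : t - t₀ ≤ |t - t₀| := le_abs_self _
        have h2 : -(t - t₀) ≤ |t - t₀| := neg_le_abs _
        rcases hs with ⟨h, h'⟩ | ⟨h, h'⟩ <;> rw [abs_sub_le_iff] <;>
          constructor <;> linarith
      have hdist : dist ((t, s) : ℝ × ℝ) (t₀, t₀) < δ := by
        rw [Prod.dist_eq]
        have h1 : dist t t₀ < δ := by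
          rw [Real.dist_eq]; exact htm.trans_le (min_le_right _ _)
        have h2 : dist s t₀ < δ := by
          rw [Real.dist_eq]
          exact (habs.trans_lt htm).trans_le (min_le_right _ _)
        exact max_lt h1 h2
      have := hδ hdist
      rw [hL] at this
      simpa [Real.dist_eq, Real.norm_eq_abs] using this
    have e1 : (∫ s in t₀..t, g t s) - (t - t₀) • H₀ t₀ x
        = ∫ s in t₀..t, (g t s - H₀ t₀ x) := by
      rw [intervalIntegral.integral_sub hint_t intervalIntegrable_const,
        intervalIntegral.integral_const]
    have e3 : ‖∫ s in t₀..t, (g t s - H₀ t₀ x)‖ ≤ c * |t - t₀| :=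
      intervalIntegral.norm_integral_le_of_norm_le_const e2
    calc ‖(∫ s in t₀..t, g t s) - (∫ s in t₀..t₀, g t₀ s) - (t - t₀) • H₀ t₀ x‖
        = ‖∫ s in t₀..t, (g t s - H₀ t₀ x)‖ := by
          rw [intervalIntegral.integral_same, sub_zero, e1]
      _ ≤ c * ‖t - t₀‖ := by rw [Real.norm_eq_abs]; exact e3
  -- Part A : derivative of the first term
  have hfirst : HasDerivAt (fun t => F₀ (U (-t) x))
      (-(fderiv ℝ F₀ (U (-t₀) x)) (U (-t₀) a)) t₀ := by
    have h1 : HasDerivAt (fun t : ℝ => U (-t) x) (-(U (-t₀) a)) t₀ := by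
      simpa [zero_sub] using hinner 0 t₀
    have h2 := (hF₀ (U (-t₀) x)).hasFDerivAt.comp_hasDerivAt t₀ h1
    simpa [Function.comp_def] using h2
  -- combine
  have hsum : HasDerivAt
      (fun t => F₀ (U (-t) x) + ((∫ s in (0:ℝ)..t₀, g t s) + ∫ s in t₀..t, g t s))
      (-(fderiv ℝ F₀ (U (-t₀) x)) (U (-t₀) a) + ((∫ s in (0:ℝ)..t₀, g' t₀ s) + H₀ t₀ x))
      t₀ := hfirst.add (hB1.add hB2)
  have hEq : F =ᶠ[nhds t₀]
      fun t => F₀ (U (-t) x) + ((∫ s in (0:ℝ)..t₀, g t s) + ∫ s in t₀..t, g t s) := by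
    filter_upwards [isOpen_Ioo.mem_nhds ht₀Ioo] with t ht
    have htIcc : t ∈ Set.Icc (0:ℝ) Tb := ⟨ht.1.le, ht.2.le⟩
    rw [hF t]
    congr 1
    rw [intervalIntegral.integral_add_adjacent_intervals (hIntg 0 h0Icc t₀ ht₀Icc t)
      (hIntg t₀ ht₀Icc t htIcc t)]
    exact (intervalIntegral.integral_of_le ht.1.le).symm
  have hFd : HasDerivAt F
      (-(fderiv ℝ F₀ (U (-t₀) x)) (U (-t₀) a) + ((∫ s in (0:ℝ)..t₀, g' t₀ s) + H₀ t₀ x))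
      t₀ := hsum.congr_of_eventuallyEq hEq
  refine ⟨hFd.differentiableAt, ?_⟩
  rw [hFd.deriv]
  have hneg : (∫ s in (0:ℝ)..t₀, g' t₀ s)
      = -∫ s in Set.Ioc (0:ℝ) t₀, (fderiv ℝ (H₀ s) (U (s - t₀) x)) (U (s - t₀) a) := by
    rw [intervalIntegral.integral_of_le ht₀0.le]
    simp only [hg'_def]
    exact integral_neg _
  rw [hneg]
  ring
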